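/- Let k ≥ 2 and let x and y be binary strings of the same length satisfying B^(k−1)(x) = B^(k−1)(y), B_L^(k−1)(x) = B_L^(k−1)(y), B_R^(k−1)(x) = B_R^(k−1)(y), and B_LR^(k−1)(x) = B_LR^(k−1)(y). Then B^(k)((0, x, 0, 0, y, 0)) = B^(k)((0, y, 0, 0, x, 0)), where (0, x, 0, 0, y, 0) denotes the concatenation of a leading 0 bit, x, two 0 bits, y, and a trailing 0 bit. -/

import Mathlib

/-- The multiset of all `s`-gapped subsequences of a binary string (all lengths,
including the empty subsequence), counted with multiplicity over index choices:
consecutive chosen indices must differ by at least `s`. -/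
def gappedSubseqs (s : ℕ) : List Bool → Multiset (List Bool)
  | [] => {[]}
  | a :: l => gappedSubseqs s l + (gappedSubseqs s (l.drop (s - 1))).map (a :: ·)
termination_by x => x.length
decreasing_by
  · simp
  · simp only [List.length_drop, List.length_cons]; omega

/-- The `s`-gapped `k`-deck: all `s`-gapped subsequences of length between 1 and `k`. -/
def gDeck (s k : ℕ) (x : List Bool) : Multiset (List Bool) :=
  (gappedSubseqs s x).filter (fun w => 1 ≤ w.length ∧ w.length ≤ k)

/-- The exact `s`-gapped `k`-deck: all `s`-gapped subsequences of length exactly `k`. -/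
def dDeck (s k : ℕ) (x : List Bool) : Multiset (List Bool) :=
  (gappedSubseqs s x).filter (fun w => w.length = k)

/-- The classical (ungapped) `k`-deck: the multiset of all length-`k` subsequences. -/
def deck (k : ℕ) (x : List Bool) : Multiset (List Bool) :=
  (gappedSubseqs 1 x).filter (fun w => w.length = k)

/-- The gapped `k`-deck `B^(k)` (gap `2`). -/
def Bdeck (k : ℕ) (x : List Bool) : Multiset (List Bool) := gDeck 2 k x

/-- `B_L^(k)`: the gapped `k`-deck of the string punctured on the left. -/
def BLdeck (k : ℕ) (x : List Bool) : Multiset (List Bool) := Bdeck k x.tail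

/-- `B_R^(k)`: the gapped `k`-deck of the string punctured on the right. -/
def BRdeck (k : ℕ) (x : List Bool) : Multiset (List Bool) := Bdeck k x.dropLast

/-- `B_LR^(k)`: the gapped `k`-deck of the string punctured on both ends. -/
def BLRdeck (k : ℕ) (x : List Bool) : Multiset (List Bool) := Bdeck k x.tail.dropLast

/-- `S(k)`: the smallest positive `n` such that two distinct binary strings of
length `n` share the same `k`-deck. -/
noncomputable def Sval (k : ℕ) : ℕ :=
  sInf {n | 0 < n ∧ ∃ x y : List Bool, x.length = n ∧ y.length = n ∧ x ≠ y ∧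
    deck k x = deck k y}

/-- `G(k)`: the smallest positive `n` such that two distinct binary strings of
length `n` share the same gapped `k`-deck. -/
noncomputable def Gval (k : ℕ) : ℕ :=
  sInf {n | 0 < n ∧ ∃ x y : List Bool, x.length = n ∧ y.length = n ∧ x ≠ y ∧
    Bdeck k x = Bdeck k y}

/-- `G_s(k)`: the smallest positive `n` such that two distinct binary strings of
length `n` share the same `s`-gapped `k`-deck. -/
noncomputable def Gs (s k : ℕ) : ℕ :=
  sInf {n | 0 < n ∧ ∃ x y : List Bool, x.length = n ∧ y.length = n ∧ x ≠ y ∧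
    gDeck s k x = gDeck s k y}

/-- `G*(k)`: the smallest positive `n` such that two distinct binary strings of
length `n` share the same gapped `k`-deck, also after puncturing on the left,
right and both sides. -/
noncomputable def Gstar (k : ℕ) : ℕ :=
  sInf {n | 0 < n ∧ ∃ x y : List Bool, x.length = n ∧ y.length = n ∧ x ≠ y ∧
    Bdeck k x = Bdeck k y ∧ BLdeck k x = BLdeck k y ∧
    BRdeck k x = BRdeck k y ∧ BLRdeck k x = BLRdeck k y}

mutual
/-- Morse-Thue string `x^(k+1)` (index shifted: `mtX 0 = x^(1) = (0,1)`). -/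
def mtX : ℕ → List Bool
  | 0 => [false, true]
  | k + 1 => mtX k ++ mtY k
/-- Morse-Thue string `y^(k+1)` (index shifted: `mtY 0 = y^(1) = (1,0)`). -/
def mtY : ℕ → List Bool
  | 0 => [true, false]
  | k + 1 => mtY k ++ mtX k
end

mutual
/-- Padded Morse-Thue string `x^(k+1)` (index shifted: `px 0 = x^(1) = (0,0,1,0)`). -/
def px : ℕ → List Bool
  | 0 => [false, false, true, false]
  | k + 1 => [false] ++ px k ++ [false, false] ++ py k ++ [false]
/-- Padded Morse-Thue string `y^(k+1)` (index shifted: `py 0 = y^(1) = (0,1,0,0)`). -/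
def py : ℕ → List Bool
  | 0 => [false, true, false, false]
  | k + 1 => [false] ++ py k ++ [false, false] ++ px k ++ [false]
end

/-- Interleaving `(z₁,x₁,z₂,x₂,…,z_{k-1},x_{k-1},z_k)` of `z` and `x`
(used with `|z| = |x| + 1`). -/
def interleave : List Bool → List Bool → List Bool
  | z, [] => z
  | [], _ :: _ => []
  | a :: l, b :: m => a :: b :: interleave l m

/-- `N(w, p)`: the number of occurrences of the wildcard string `w`
(entries `none` are wildcards `J`, `some b` is a letter of `Γ = {X, Y}`)
as a subsequence of `p`, each wildcard matching either letter. -/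
def Nw : List (Option Bool) → List Bool → ℕ
  | [], _ => 1
  | _ :: _, [] => 0
  | a :: w, b :: p =>
      Nw (a :: w) p + if a = none ∨ a = some b then Nw w p else 0

/-- `U_r(k)`: wildcard strings of length between `r` and `k` with exactly `r`
non-wildcard symbols. -/
def Ur (r k : ℕ) : Set (List (Option Bool)) :=
  {w | r ≤ w.length ∧ w.length ≤ k ∧ w.countP (fun a => a.isSome) = r}

/-- `U(k₁, k₂) = U₁(k₁) ∪ U₂(k₂)`. -/
def Uset (k1 k2 : ℕ) : Set (List (Option Bool)) := Ur 1 k1 ∪ Ur 2 k2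

/-- `p ∼^{U(k₁,k₂)} q`: `N(w,p) = N(w,q)` for all `w ∈ U(k₁,k₂)`. -/
def equivU (k1 k2 : ℕ) (p q : List Bool) : Prop :=
  ∀ w ∈ Uset k1 k2, Nw w p = Nw w q

/-- `S_U(k₁,k₂)`: the smallest `m` for which two distinct strings
`p, q ∈ Γ^m` satisfy `p ∼^{U(k₁,k₂)} q`. -/
noncomputable def SU (k1 k2 : ℕ) : ℕ :=
  sInf {m | ∃ p q : List Bool, p.length = m ∧ q.length = m ∧ p ≠ q ∧
    equivU k1 k2 p q}

/-- `h_{x,y}(p)`: replace each letter of `p` (`false = X`, `true = Y`) by `x`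
resp. `y` padded with one `0` at each end. -/
def hxy (x y : List Bool) (p : List Bool) : List Bool :=
  (p.map (fun b => [false] ++ (if b then y else x) ++ [false])).flatten

abbrev G (l : List Bool) : Multiset (List Bool) := gappedSubseqs 2 l

lemma Gnil : G [] = {[]} := by rw [G, gappedSubseqs]

lemma Gcons (a : Bool) (l : List Bool) :
    G (a :: l) = G l + (G l.tail).map (a :: ·) := by
  rw [G, gappedSubseqs]; simp [List.drop_one]

/-- gapped subsequences using the last element. -/
def GE : List Bool → Multiset (List Bool)
  | [] => 0
  | [a] => {[a]}
  | a :: b :: l => GE (b :: l) + (GE l).map (a :: ·)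

def cx (m n : Multiset (List Bool)) : Multiset (List Bool) :=
  m.bind (fun w => n.map (w ++ ·))

lemma cx_add_left (m m' n : Multiset (List Bool)) :
    cx (m + m') n = cx m n + cx m' n := Multiset.add_bind _ _ _

lemma cx_add_right (m n n' : Multiset (List Bool)) :
    cx m (n + n') = cx m n + cx m n' := by
  simp [cx, Multiset.map_add, Multiset.bind_add]

lemma cx_map_left (a : Bool) (m n : Multiset (List Bool)) :
    cx (m.map (a :: ·)) n = (cx m n).map (a :: ·) := by
  simp [cx, Multiset.bind_map, Multiset.map_bind, Multiset.map_map, Function.comp]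

lemma cx_nil_left (n : Multiset (List Bool)) : cx {[]} n = n := by
  simp [cx]

lemma cx_nil_right (m : Multiset (List Bool)) : cx m {[]} = m := by
  simp only [cx, Multiset.map_singleton, List.append_nil]
  rw [show (fun (w : List Bool) => ({w} : Multiset (List Bool))) = (fun w => {id w}) from rfl,
    Multiset.bind_singleton, Multiset.map_id]

lemma cx_singleton_left (w : List Bool) (n : Multiset (List Bool)) :
    cx {w} n = n.map (w ++ ·) := by simp [cx]

lemma Gsplit : ∀ l : List Bool, G l = G l.dropLast + GE l
  | [] => by rw [Gnil, GE]; simp [Gnil]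
  | [a] => by
      rw [Gcons, GE]; simp [Gnil]
  | a :: b :: l => by
      rw [List.dropLast_cons₂, Gcons a ((b :: l).dropLast), Gcons a (b :: l), GE]
      rw [show (b :: l).dropLast.tail = l.dropLast from by rw [List.tail_dropLast]; rfl]
      simp only [List.tail_cons]
      rw [Gsplit (b :: l), Gsplit l, Multiset.map_add]
      abel
termination_by l => l.length

lemma key : ∀ u v : List Bool,
    G (u ++ v) = cx (G u.dropLast) (G v) + cx (GE u) (G v.tail)
  | [], v => by
      simp [Gnil, GE, cx_nil_left, cx]
  | [a], v => by
      rw [show ([a] ++ v) = a :: v from rfl, Gcons]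
      rw [show ([a] : List Bool).dropLast = [] from rfl, Gnil, GE, cx_nil_left,
        cx_singleton_left]
      rfl
  | a :: b :: u', v => by
      have ih1 := key (b :: u') v
      have ih2 := key u' v
      rw [show ((a :: b :: u') ++ v) = a :: ((b :: u') ++ v) from rfl, Gcons,
        show ((b :: u') ++ v).tail = u' ++ v from rfl, ih1, ih2,
        List.dropLast_cons₂, Gcons, GE]
      have htl : (b :: u').dropLast.tail = u'.dropLast := by
        rw [List.tail_dropLast]; rfl
      rw [htl, Multiset.map_add, cx_add_left, cx_add_left, cx_map_left, cx_map_left]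
      abel
termination_by u _ => u.length

lemma Gconcat1 (l : List Bool) (c : Bool) :
    G (l ++ [c]) = G l + (G l.dropLast).map (· ++ [c]) := by
  rw [key l [c]]
  rw [show ([c] : List Bool).tail = [] from rfl, Gnil, cx_nil_right,
    Gcons c [], Gnil]
  simp only [List.tail_nil, Gnil, Multiset.map_singleton]
  rw [cx_add_right, cx_nil_right, Gsplit l]
  have : cx (G l.dropLast) {[c]} = (G l.dropLast).map (· ++ [c]) := by
    simp [cx]
  rw [this]; abel

lemma GEappend (l : List Bool) (c : Bool) :
    GE (l ++ [c]) = (G l.dropLast).map (· ++ [c]) := by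
  have h1 := Gsplit (l ++ [c])
  rw [List.dropLast_concat] at h1
  have h2 := Gconcat1 l c
  exact add_left_cancel (h1.symm.trans h2)

lemma count_nil_G (l : List Bool) : (G l).count [] = 1 := by
  induction l with
  | nil => rw [Gnil]; rfl
  | cons a l ih =>
      rw [Gcons, Multiset.count_add, ih]
      have h : ([] : List Bool) ∉ (G l.tail).map (a :: ·) := by simp
      rw [Multiset.count_eq_zero.2 h]

lemma GE_ne_nil : ∀ (l : List Bool), ∀ w ∈ GE l, w ≠ []
  | [], w, hw => by simp [GE] at hw
  | [a], w, hw => by rw [GE] at hw; simp at hw; simp [hw]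
  | a :: b :: l, w, hw => by
      rw [GE, Multiset.mem_add] at hw
      rcases hw with hw | hw
      · exact GE_ne_nil (b :: l) w hw
      · rw [Multiset.mem_map] at hw
        obtain ⟨u, _, rfl⟩ := hw
        simp

/-! ### filter machinery -/

/-- exact-length part -/
def dk (a : ℕ) (m : Multiset (List Bool)) : Multiset (List Bool) :=
  m.filter (fun w => w.length = a)

/-- length-range part (the deck filter) -/
def rk (N : ℕ) (m : Multiset (List Bool)) : Multiset (List Bool) :=
  m.filter (fun w => 1 ≤ w.length ∧ w.length ≤ N)

/-- nonempty part -/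
def pk (m : Multiset (List Bool)) : Multiset (List Bool) :=
  m.filter (fun w => 1 ≤ w.length)

lemma dk_add (a : ℕ) (m n : Multiset (List Bool)) :
    dk a (m + n) = dk a m + dk a n := Multiset.filter_add _ _ _

lemma rk_add (N : ℕ) (m n : Multiset (List Bool)) :
    rk N (m + n) = rk N m + rk N n := Multiset.filter_add _ _ _

lemma dk_G_zero (l : List Bool) : dk 0 (G l) = {[]} := by
  have h1 : dk 0 (G l) = (G l).filter (fun w => w = []) := by
    apply Multiset.filter_congr; intro w _; simp [List.length_eq_zero_iff]
  rw [h1]; convert Multiset.filter_eq' (G l) ([] : List Bool) using 1; rw [count_nil_G]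
  rfl

lemma dk_map_cons (a : ℕ) (c : Bool) (m : Multiset (List Bool)) (ha : 1 ≤ a) :
    dk a (m.map (c :: ·)) = (dk (a - 1) m).map (c :: ·) := by
  rw [dk, dk, Multiset.filter_map]
  congr 1
  apply Multiset.filter_congr; intro w _
  simp only [Function.comp, List.length_cons]
  omega

lemma dk_map_append (a : ℕ) (c : Bool) (m : Multiset (List Bool)) (ha : 1 ≤ a) :
    dk a (m.map (· ++ [c])) = (dk (a - 1) m).map (· ++ [c]) := by
  rw [dk, dk, Multiset.filter_map]
  congr 1
  apply Multiset.filter_congr; intro w _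
  simp only [Function.comp, List.length_append, List.length_singleton]
  omega

lemma dk_of_rk {N : ℕ} {m m' : Multiset (List Bool)} (h : rk N m = rk N m')
    (a : ℕ) (h1 : 1 ≤ a) (h2 : a ≤ N) : dk a m = dk a m' := by
  have key : ∀ mm : Multiset (List Bool), dk a mm = dk a (rk N mm) := by
    intro mm
    rw [rk, dk, dk, Multiset.filter_filter]
    apply Multiset.filter_congr; intro w _
    constructor
    · intro hw; exact ⟨hw, ⟨by omega, by omega⟩⟩
    · intro hw; exact hw.1
  rw [key m, key m', h]

lemma dk_pk (a : ℕ) (m : Multiset (List Bool)) (ha : 1 ≤ a) :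
    dk a (pk m) = dk a m := by
  rw [pk, dk, dk, Multiset.filter_filter]
  apply Multiset.filter_congr; intro w _; omega

lemma rk_pk (N : ℕ) (m : Multiset (List Bool)) : rk N (pk m) = rk N m := by
  rw [pk, rk, rk, Multiset.filter_filter]
  apply Multiset.filter_congr; intro w _; omega

lemma pk_mem_ne_nil {m : Multiset (List Bool)} {w : List Bool} (hw : w ∈ pk m) :
    w ≠ [] := by
  rw [pk, Multiset.mem_filter] at hw
  intro h; subst h; simp at hw

lemma G_split_empty (l : List Bool) : G l = {[]} + pk (G l) := by
  have h := Multiset.filter_add_not (fun w => 1 ≤ w.length) (G l)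
  have h2 : (G l).filter (fun w => ¬ 1 ≤ w.length) = dk 0 (G l) := by
    rw [dk]; apply Multiset.filter_congr; intro w _; omega
  rw [dk_G_zero] at h2
  calc G l = pk (G l) + (G l).filter (fun w => ¬ 1 ≤ w.length) := h.symm
    _ = pk (G l) + {[]} := by rw [h2]
    _ = {[]} + pk (G l) := add_comm _ _

/-- le-N filter -/
def lk (N : ℕ) (m : Multiset (List Bool)) : Multiset (List Bool) :=
  m.filter (fun w => w.length ≤ N)

lemma lk_succ (N : ℕ) (m : Multiset (List Bool)) :
    lk (N + 1) m = lk N m + dk (N + 1) m := by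
  have h := Multiset.filter_add_filter (fun w : List Bool => w.length ≤ N)
    (fun w : List Bool => w.length = N + 1) m
  have h1 : (m.filter fun w => w.length ≤ N ∨ w.length = N + 1) = lk (N+1) m := by
    rw [lk]; apply Multiset.filter_congr; intro w _; omega
  have h2 : (m.filter fun w => w.length ≤ N ∧ w.length = N + 1) = 0 := by
    rw [Multiset.filter_eq_nil]; intro w _ hw; omega
  rw [h1, h2, add_zero] at h
  rw [← h]; rfl

lemma lk_congr {N : ℕ} {m m' : Multiset (List Bool)}
    (h : ∀ a, a ≤ N → dk a m = dk a m') : lk N m = lk N m' := by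
  induction N with
  | zero =>
      have e : ∀ mm : Multiset (List Bool), lk 0 mm = dk 0 mm := by
        intro mm; rw [lk, dk]; apply Multiset.filter_congr; intro w _; omega
      rw [e, e, h 0 (le_refl 0)]
  | succ N ih =>
      rw [lk_succ, lk_succ, ih (fun a ha => h a (by omega)), h (N+1) (le_refl _)]

lemma cx_trunc_left (N : ℕ) (m n : Multiset (List Bool))
    (hn : ∀ w ∈ n, w ≠ []) :
    rk (N + 1) (cx m n) = rk (N + 1) (cx (lk N m) n) := by
  conv_lhs => rw [← Multiset.filter_add_not (fun w => w.length ≤ N) m]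
  rw [cx_add_left, rk_add]
  have h0 : rk (N + 1) (cx (m.filter (fun w => ¬ w.length ≤ N)) n) = 0 := by
    rw [rk, Multiset.filter_eq_nil]
    intro w hw
    rw [cx, Multiset.mem_bind] at hw
    obtain ⟨w1, hw1, hw2⟩ := hw
    rw [Multiset.mem_map] at hw2
    obtain ⟨w2, hw2, rfl⟩ := hw2
    rw [Multiset.mem_filter] at hw1
    have h1 : ¬ w1.length ≤ N := hw1.2
    have h2 : 1 ≤ w2.length := List.length_pos_iff.2 (hn w2 hw2)
    simp only [List.length_append]
    omega
  rw [h0, add_zero]; rfl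

lemma cx_trunc_right (N : ℕ) (m n : Multiset (List Bool))
    (hm : ∀ w ∈ m, w ≠ []) :
    rk (N + 1) (cx m n) = rk (N + 1) (cx m (lk N n)) := by
  conv_lhs => rw [← Multiset.filter_add_not (fun w => w.length ≤ N) n]
  rw [cx_add_right, rk_add]
  have h0 : rk (N + 1) (cx m (n.filter (fun w => ¬ w.length ≤ N))) = 0 := by
    rw [rk, Multiset.filter_eq_nil]
    intro w hw
    rw [cx, Multiset.mem_bind] at hw
    obtain ⟨w1, hw1, hw2⟩ := hw
    rw [Multiset.mem_map] at hw2
    obtain ⟨w2, hw2, rfl⟩ := hw2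
    rw [Multiset.mem_filter] at hw2
    have h1 : ¬ w2.length ≤ N := hw2.2
    have h2 : 1 ≤ w1.length := List.length_pos_iff.2 (hm w1 hw1)
    simp only [List.length_append]
    omega
  rw [h0, add_zero]; rfl

lemma crossCongr (N : ℕ) (m1 m1' m2 m2' : Multiset (List Bool))
    (e1 : ∀ w ∈ m1, w ≠ []) (e1' : ∀ w ∈ m1', w ≠ [])
    (e2 : ∀ w ∈ m2, w ≠ []) (e2' : ∀ w ∈ m2', w ≠ [])
    (h1 : ∀ a, 1 ≤ a → a ≤ N → dk a m1 = dk a m1')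
    (h2 : ∀ a, 1 ≤ a → a ≤ N → dk a m2 = dk a m2') :
    rk (N + 1) (cx m1 m2) = rk (N + 1) (cx m1' m2') := by
  have dk0 : ∀ (m : Multiset (List Bool)), (∀ w ∈ m, w ≠ []) → dk 0 m = 0 := by
    intro m hm
    rw [dk, Multiset.filter_eq_nil]
    intro w hw hl
    exact hm w hw (List.length_eq_zero_iff.1 hl)
  have h1' : ∀ a, a ≤ N → dk a m1 = dk a m1' := by
    intro a ha
    rcases Nat.eq_zero_or_pos a with h | h
    · subst h; rw [dk0 m1 e1, dk0 m1' e1']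
    · exact h1 a h ha
  have h2' : ∀ a, a ≤ N → dk a m2 = dk a m2' := by
    intro a ha
    rcases Nat.eq_zero_or_pos a with h | h
    · subst h; rw [dk0 m2 e2, dk0 m2' e2']
    · exact h2 a h ha
  have hlkm : ∀ w ∈ lk N m1, w ≠ [] := fun w hw =>
    e1 w (Multiset.mem_of_mem_filter hw)
  have hlkm' : ∀ w ∈ lk N m1', w ≠ [] := fun w hw =>
    e1' w (Multiset.mem_of_mem_filter hw)
  rw [cx_trunc_left N m1 m2 e2, cx_trunc_left N m1' m2' e2',
    cx_trunc_right N _ m2 hlkm, cx_trunc_right N _ m2' hlkm',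
    lk_congr h1', lk_congr h2']

lemma rk_nil (K : ℕ) : rk K {[]} = 0 := by
  rw [rk, Multiset.filter_eq_nil]
  intro w hw
  rw [Multiset.mem_singleton] at hw
  subst hw; simp

lemma decomp (K : ℕ) (x y : List Bool) (hx : x ≠ []) :
    rk K (G ([false] ++ x ++ [false, false] ++ y ++ [false])) =
      (rk K (G (false :: (y ++ [false]))) + rk K (G (false :: (x ++ [false])))) +
      (rk K (cx (pk (G (false :: x))) (pk (G (false :: (y ++ [false]))))) +
       rk K (cx ((G (false :: x.dropLast)).map (· ++ [false]))
             (pk (G (y ++ [false]))))) := by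
  have hd2 : (false :: x).dropLast = false :: x.dropLast := by
    cases x with
    | nil => exact absurd rfl hx
    | cons a l => simp
  have hP : [false] ++ x ++ [false, false] ++ y ++ [false] =
      ((false :: x) ++ [false]) ++ (false :: (y ++ [false])) := by simp
  rw [hP, key, List.dropLast_concat, GEappend, hd2,
    show (false :: (y ++ [false])).tail = y ++ [false] from rfl]
  have e1 : cx (G (false :: x)) (G (false :: (y ++ [false]))) =
      {[]} + pk (G (false :: (y ++ [false]))) + pk (G (false :: x)) +
        cx (pk (G (false :: x))) (pk (G (false :: (y ++ [false])))) := by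
    conv_lhs => rw [G_split_empty (false :: x), G_split_empty (false :: (y ++ [false])),
      cx_add_left, cx_nil_left, cx_add_right, cx_nil_right]
    abel
  have e2 : cx ((G (false :: x.dropLast)).map (· ++ [false])) (G (y ++ [false])) =
      (G (false :: x.dropLast)).map (· ++ [false]) +
        cx ((G (false :: x.dropLast)).map (· ++ [false])) (pk (G (y ++ [false]))) := by
    conv_lhs => rw [G_split_empty (y ++ [false]), cx_add_right, cx_nil_right]
  rw [e1, e2]
  have e3 : rk K (G (false :: (x ++ [false]))) =
      rk K (G (false :: x)) + rk K ((G (false :: x.dropLast)).map (· ++ [false])) := by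
    rw [show (false :: (x ++ [false])) = (false :: x) ++ [false] from rfl,
      Gsplit ((false :: x) ++ [false]), List.dropLast_concat, GEappend, hd2, rk_add]
  simp only [rk_add]
  rw [rk_nil, rk_pk, rk_pk, e3]
  abel


lemma map_append_ne_nil {m : Multiset (List Bool)} {w : List Bool}
    (hw : w ∈ m.map (· ++ [false])) : w ≠ [] := by
  rw [Multiset.mem_map] at hw
  obtain ⟨u, _, rfl⟩ := hw
  simp

/-- Under the inductive hypotheses at level `k-1`,
`B^(k)((0,x,0,0,y,0)) = B^(k)((0,y,0,0,x,0))`. -/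
theorem stmt9 (k n : ℕ) (hk : 2 ≤ k) (x y : List Bool)
    (hx : x.length = n) (hy : y.length = n)
    (hB : Bdeck (k - 1) x = Bdeck (k - 1) y)
    (hL : BLdeck (k - 1) x = BLdeck (k - 1) y)
    (hR : BRdeck (k - 1) x = BRdeck (k - 1) y)
    (hLR : BLRdeck (k - 1) x = BLRdeck (k - 1) y) :
    Bdeck k ([false] ++ x ++ [false, false] ++ y ++ [false]) =
      Bdeck k ([false] ++ y ++ [false, false] ++ x ++ [false]) := by
  by_cases hx0 : x = []
  · have hy0 : y = [] := by
      rw [← List.length_eq_zero_iff, hy, ← hx, hx0]; rfl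
    subst hx0; subst hy0; rfl
  · have hy0 : y ≠ [] := by
      intro h
      apply hx0
      rw [← List.length_eq_zero_iff, hx, ← hy, h]; rfl
    obtain ⟨N, rfl⟩ : ∃ N, k = N + 1 := ⟨k - 1, by omega⟩
    have hN : 1 ≤ N := by omega
    simp only [Nat.add_sub_cancel] at hB hL hR hLR
    -- base dk equalities
    have hB2 : rk N (G x) = rk N (G y) := hB
    have hL2 : rk N (G x.tail) = rk N (G y.tail) := hL
    have hR2 : rk N (G x.dropLast) = rk N (G y.dropLast) := hR
    have hLR2 : rk N (G x.tail.dropLast) = rk N (G y.tail.dropLast) := hLR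
    have ext : ∀ (u v : List Bool), rk N (G u) = rk N (G v) →
        ∀ a, a ≤ N → dk a (G u) = dk a (G v) := by
      intro u v h a ha
      rcases Nat.eq_zero_or_pos a with h0 | h0
      · subst h0; rw [dk_G_zero, dk_G_zero]
      · exact dk_of_rk h a h0 ha
    have dB := ext x y hB2
    have dL := ext x.tail y.tail hL2
    have dR := ext x.dropLast y.dropLast hR2
    have dLR := ext x.tail.dropLast y.tail.dropLast hLR2
    have hdx : (false :: x).dropLast = false :: x.dropLast := by
      cases x with
      | nil => exact absurd rfl hx0
      | cons a l => simp
    have hdy : (false :: y).dropLast = false :: y.dropLast := by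
      cases y with
      | nil => exact absurd rfl hy0
      | cons a l => simp
    -- composite dk equalities
    have d1 : ∀ a, a ≤ N → dk a (G (false :: x)) = dk a (G (false :: y)) := by
      intro a ha
      rcases Nat.eq_zero_or_pos a with h0 | h0
      · subst h0; rw [dk_G_zero, dk_G_zero]
      · rw [Gcons false x, Gcons false y, dk_add, dk_add,
          dk_map_cons _ _ _ h0, dk_map_cons _ _ _ h0,
          dB a ha, dL (a - 1) (by omega)]
    have d2 : ∀ a, a ≤ N →
        dk a (G (false :: x.dropLast)) = dk a (G (false :: y.dropLast)) := by
      intro a ha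
      rcases Nat.eq_zero_or_pos a with h0 | h0
      · subst h0; rw [dk_G_zero, dk_G_zero]
      · rw [Gcons false x.dropLast, Gcons false y.dropLast, dk_add, dk_add,
          dk_map_cons _ _ _ h0, dk_map_cons _ _ _ h0, dR a ha]
        congr 2
        rw [show x.dropLast.tail = x.tail.dropLast from List.tail_dropLast,
          show y.dropLast.tail = y.tail.dropLast from List.tail_dropLast,
          dLR (a - 1) (by omega)]
    have d3 : ∀ a, a ≤ N → dk a (G (x ++ [false])) = dk a (G (y ++ [false])) := by
      intro a ha
      rcases Nat.eq_zero_or_pos a with h0 | h0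
      · subst h0; rw [dk_G_zero, dk_G_zero]
      · rw [Gconcat1, Gconcat1, dk_add, dk_add,
          dk_map_append _ _ _ h0, dk_map_append _ _ _ h0,
          dB a ha, dR (a - 1) (by omega)]
    have d4 : ∀ a, a ≤ N →
        dk a (G (false :: (x ++ [false]))) = dk a (G (false :: (y ++ [false]))) := by
      intro a ha
      rcases Nat.eq_zero_or_pos a with h0 | h0
      · subst h0; rw [dk_G_zero, dk_G_zero]
      · show dk a (G ((false :: x) ++ [false])) = dk a (G ((false :: y) ++ [false]))
        rw [Gconcat1, Gconcat1, dk_add, dk_add,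
          dk_map_append _ _ _ h0, dk_map_append _ _ _ h0,
          hdx, hdy, d1 a ha, d2 (a - 1) (by omega)]
    have d5 : ∀ a, 1 ≤ a → a ≤ N →
        dk a ((G (false :: x.dropLast)).map (· ++ [false])) =
          dk a ((G (false :: y.dropLast)).map (· ++ [false])) := by
      intro a h0 ha
      rw [dk_map_append _ _ _ h0, dk_map_append _ _ _ h0, d2 (a - 1) (by omega)]
    -- main decomposition
    show rk (N + 1) (G ([false] ++ x ++ [false, false] ++ y ++ [false])) =
      rk (N + 1) (G ([false] ++ y ++ [false, false] ++ x ++ [false]))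
    rw [decomp (N + 1) x y hx0, decomp (N + 1) y x hy0]
    have c1 : rk (N + 1) (cx (pk (G (false :: x))) (pk (G (false :: (y ++ [false]))))) =
        rk (N + 1) (cx (pk (G (false :: y))) (pk (G (false :: (x ++ [false]))))) := by
      apply crossCongr N
      · exact fun w hw => pk_mem_ne_nil hw
      · exact fun w hw => pk_mem_ne_nil hw
      · exact fun w hw => pk_mem_ne_nil hw
      · exact fun w hw => pk_mem_ne_nil hw
      · intro a h0 ha
        rw [dk_pk _ _ h0, dk_pk _ _ h0]
        exact d1 a ha
      · intro a h0 ha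
        rw [dk_pk _ _ h0, dk_pk _ _ h0]
        exact (d4 a ha).symm
    have c2 : rk (N + 1) (cx ((G (false :: x.dropLast)).map (· ++ [false]))
          (pk (G (y ++ [false])))) =
        rk (N + 1) (cx ((G (false :: y.dropLast)).map (· ++ [false]))
          (pk (G (x ++ [false])))) := by
      apply crossCongr N
      · exact fun w hw => map_append_ne_nil hw
      · exact fun w hw => map_append_ne_nil hw
      · exact fun w hw => pk_mem_ne_nil hw
      · exact fun w hw => pk_mem_ne_nil hw
      · exact d5
      · intro a h0 ha
        rw [dk_pk _ _ h0, dk_pk _ _ h0]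
        exact (d3 a ha).symm
    rw [c1, c2, add_comm (rk (N + 1) (G (false :: (y ++ [false]))))
      (rk (N + 1) (G (false :: (x ++ [false]))))]
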